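/- arXiv:2005.05552 — 4 statements merged into one kernel-verified Lean document; each statement's English description precedes it below -/
import Mathlib

section
/- For every shape factor c > 0 and every σ > 0, the generalized Gaussian density integrates to one: ∫_{ℝ} A·exp(−|β·x|^c) dx = 1. -/
/-
The substitution `y = β x` reduces the integral to `β⁻¹ ∫ exp (-|y| ^ c) dy`, and by symmetry
`∫ exp (-|y| ^ c) dy = 2 ∫₀^∞ exp (-y ^ c) dy = 2 Γ(1 / c + 1) = 2 Γ(1 / c) / c`, which is exactly
the reciprocal of `A / β`.
-/

open Real MeasureTheory

/-- Scale parameter β of the generalized Gaussian density. -/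
noncomputable def ggdBeta (c σ : ℝ) : ℝ :=
  (1 / σ) * Real.sqrt (Real.Gamma (3 / c) / Real.Gamma (1 / c))

/-- Normalizing constant A of the generalized Gaussian density. -/
noncomputable def ggdA (c σ : ℝ) : ℝ :=
  ggdBeta c σ * c / (2 * Real.Gamma (1 / c))

/-- The generalized Gaussian density with shape factor `c` and scale `σ`. -/
noncomputable def ggdPdf (c σ : ℝ) (x : ℝ) : ℝ :=
  ggdA c σ * Real.exp (-|ggdBeta c σ * x| ^ c)

theorem integral_exp_neg_abs_rpow {c : ℝ} (hc : 0 < c) :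
    ∫ x : ℝ, exp (-|x| ^ c) = 2 * Gamma (1 / c) / c := by
  rw [integral_comp_abs (f := fun x => exp (-x ^ c)), integral_exp_neg_rpow hc,
    Gamma_add_one (one_div_ne_zero hc.ne')]
  field_simp

theorem integral_exp_neg_abs_mul_rpow {b c : ℝ} (hb : b ≠ 0) (hc : 0 < c) :
    ∫ x : ℝ, exp (-|b * x| ^ c) = 2 * Gamma (1 / c) / (c * |b|) := by
  rw [Measure.integral_comp_mul_left (fun x => exp (-|x| ^ c)), integral_exp_neg_abs_rpow hc,
    smul_eq_mul, abs_inv]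
  field_simp

theorem ggdBeta_pos {c σ : ℝ} (hc : 0 < c) (hσ : 0 < σ) : 0 < ggdBeta c σ := by
  have hΓ1 : 0 < Gamma (1 / c) := Gamma_pos_of_pos (by positivity)
  have hΓ3 : 0 < Gamma (3 / c) := Gamma_pos_of_pos (by positivity)
  unfold ggdBeta
  positivity

/-- The generalized Gaussian density integrates to one. -/
theorem ggdPdf_integral_eq_one (c σ : ℝ) (hc : 0 < c) (hσ : 0 < σ) :
    ∫ x : ℝ, ggdPdf c σ x = 1 := by
  have hβ := ggdBeta_pos hc hσ
  have hΓ : 0 < Gamma (1 / c) := Gamma_pos_of_pos (by positivity)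
  simp only [ggdPdf]
  rw [integral_const_mul, integral_exp_neg_abs_mul_rpow hβ.ne' hc, abs_of_pos hβ, ggdA]
  field_simp
end

section
/- Fix σ > 0. As the shape factor c tends to +∞, the generalized Gaussian density converges pointwise to the uniform density of variance σ²: for every x ∈ ℝ with |x| < √3·σ one has lim_{c→+∞} P_{c,σ}(x) = 1/(2·√3·σ), and for every x with |x| > √3·σ one has lim_{c→+∞} P_{c,σ}(x) = 0. -/
open Real MeasureTheory

/-!
From `Γ(s + 1) = s Γ(s)` and continuity of `Γ` at `1`, `Γ(a/c) ~ c/a` as `c → ∞`. Hence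
`β → √(1/3) / σ` and `A = β / (2 Γ(1 + 1/c)) → 1/(2√3 σ)`, while `|β x|^c` tends to `0` or to `∞`
according as the limit `|x|/(√3 σ)` of `|β x|` is below or above `1`.
-/

open Filter Topology

theorem tendsto_Gamma_div_add_one (a : ℝ) :
    Tendsto (fun c : ℝ => Gamma (a / c + 1)) atTop (𝓝 1) := by
  have hcont : ContinuousAt Gamma 1 :=
    (differentiableAt_Gamma fun m h => by linarith [m.cast_nonneg (α := ℝ)]).continuousAt
  have hlim : Tendsto (fun c : ℝ => a / c + 1) atTop (𝓝 1) := by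
    simpa using (tendsto_const_nhds.div_atTop tendsto_id).add_const (1 : ℝ)
  simpa [Gamma_one, Function.comp_def] using hcont.tendsto.comp hlim

theorem tendsto_Gamma_div_div_Gamma_div {a b : ℝ} (ha : a ≠ 0) (hb : b ≠ 0) :
    Tendsto (fun c : ℝ => Gamma (a / c) / Gamma (b / c)) atTop (𝓝 (b / a)) := by
  have hlim := tendsto_const_nhds (x := b / a)
    |>.mul ((tendsto_Gamma_div_add_one a).div (tendsto_Gamma_div_add_one b) one_ne_zero)
  rw [div_one, mul_one] at hlim
  refine hlim.congr' ?_
  filter_upwards [eventually_gt_atTop 0] with c hc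
  rw [Pi.div_apply, Gamma_add_one (by positivity), Gamma_add_one (by positivity)]
  field_simp

theorem tendsto_ggdBeta (σ : ℝ) :
    Tendsto (fun c : ℝ => ggdBeta c σ) atTop (𝓝 (1 / (√3 * σ))) := by
  have hlim := tendsto_const_nhds (x := 1 / σ) |>.mul
    ((continuous_sqrt.tendsto _).comp (tendsto_Gamma_div_div_Gamma_div three_ne_zero one_ne_zero))
  rwa [one_div 3, sqrt_inv, ← one_div, div_mul_div_comm, one_mul, mul_comm σ] at hlim

theorem tendsto_ggdA (σ : ℝ) :
    Tendsto (fun c : ℝ => ggdA c σ) atTop (𝓝 (1 / (2 * √3 * σ))) := by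
  have hlim := (tendsto_ggdBeta σ).div
    (tendsto_const_nhds (x := (2 : ℝ)).mul (tendsto_Gamma_div_add_one 1)) (by norm_num)
  rw [show 1 / (√3 * σ) / (2 * 1) = 1 / (2 * √3 * σ) by ring] at hlim
  refine hlim.congr' ?_
  filter_upwards [eventually_gt_atTop 0] with c hc
  rw [Pi.div_apply, ggdA, Gamma_add_one (by positivity)]
  field_simp

theorem tendsto_abs_rpow_self_of_abs_lt_one {f : ℝ → ℝ} {L : ℝ} (hf : Tendsto f atTop (𝓝 L))
    (hL : |L| < 1) : Tendsto (fun c => |f c| ^ c) atTop (𝓝 0) := by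
  obtain ⟨r, hLr, hr1⟩ := exists_between hL
  have hr0 : 0 ≤ r := (abs_nonneg L).trans hLr.le
  refine tendsto_of_tendsto_of_tendsto_of_le_of_le' tendsto_const_nhds
    (tendsto_rpow_atTop_of_base_lt_one r (by linarith) hr1) ?_ ?_
  · exact Eventually.of_forall fun c => by positivity
  · filter_upwards [hf.abs.eventually_le_const hLr, eventually_ge_atTop 0] with c hfc hc
    exact rpow_le_rpow (abs_nonneg _) hfc hc

theorem tendsto_abs_rpow_self_of_one_lt_abs {f : ℝ → ℝ} {L : ℝ} (hf : Tendsto f atTop (𝓝 L))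
    (hL : 1 < |L|) : Tendsto (fun c => |f c| ^ c) atTop atTop := by
  obtain ⟨r, hr1, hrL⟩ := exists_between hL
  refine tendsto_atTop_mono' _ ?_ (tendsto_rpow_atTop_of_base_gt_one r hr1)
  filter_upwards [hf.abs.eventually_const_le hrL, eventually_ge_atTop 0] with c hfc hc
  exact rpow_le_rpow (by linarith) hfc hc

/-- As the shape factor tends to `+∞`, the generalized Gaussian density converges
pointwise to the uniform density of variance `σ²` on `(-√3·σ, √3·σ)`. -/
theorem ggdPdf_tendsto_uniform (σ : ℝ) (hσ : 0 < σ) :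
    (∀ x : ℝ, |x| < Real.sqrt 3 * σ →
      Filter.Tendsto (fun c : ℝ => ggdPdf c σ x) Filter.atTop
        (nhds (1 / (2 * Real.sqrt 3 * σ)))) ∧
    (∀ x : ℝ, Real.sqrt 3 * σ < |x| →
      Filter.Tendsto (fun c : ℝ => ggdPdf c σ x) Filter.atTop (nhds 0)) := by
  have hscale : 0 < √3 * σ := by positivity
  have hβx (x : ℝ) : Tendsto (fun c => ggdBeta c σ * x) atTop (𝓝 (x / (√3 * σ))) := by
    simpa [div_eq_inv_mul] using (tendsto_ggdBeta σ).mul_const x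
  have habs (x : ℝ) : |x / (√3 * σ)| = |x| / (√3 * σ) := by rw [abs_div, abs_of_pos hscale]
  refine ⟨fun x hx => ?_, fun x hx => ?_⟩
  · have hpow := tendsto_abs_rpow_self_of_abs_lt_one (hβx x) (by rwa [habs, div_lt_one hscale])
    simpa [ggdPdf] using (tendsto_ggdA σ).mul hpow.neg.rexp
  · have hpow := tendsto_abs_rpow_self_of_one_lt_abs (hβx x) (by rwa [habs, one_lt_div hscale])
    simpa [ggdPdf] using
      (tendsto_ggdA σ).mul (tendsto_exp_atBot.comp (tendsto_neg_atTop_atBot.comp hpow))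
end

section
/- The modulus of the Benford–Fourier coefficients depends only on the shape factor c and not on σ: for every c > 0, all σ₁, σ₂ > 0 and every positive integer n, one has |∫_{ℝ} P_{c,σ₁}(x)·exp(−2πi·n·log₁₀|x|) dx| = |∫_{ℝ} P_{c,σ₂}(x)·exp(−2πi·n·log₁₀|x|) dx|. -/
open Real MeasureTheory

/-- The `n`-th Benford–Fourier coefficient of the generalized Gaussian density:
`a_n = ∫ P_{c,σ}(x) · exp(−2πi·n·log₁₀|x|) dx`. -/
noncomputable def bfCoeff (c σ : ℝ) (n : ℕ) : ℂ :=
  ∫ x : ℝ, (ggdPdf c σ x : ℂ) *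
    Complex.exp (-((2 * π * n * Real.logb 10 |x| : ℝ) : ℂ) * Complex.I)

/-
The density rescales as `P_{c,σ}(x) = σ⁻¹ P_{c,1}(x/σ)`, and the kernel `x ↦ exp(−2πi·n·log₁₀|x|)` is a
multiplicative character of `ℝˣ`. Substituting `x = σy` therefore gives
`a_n(σ) = exp(−2πi·n·log₁₀σ) · a_n(1)`, a unimodular multiple of a coefficient not depending on `σ`.
-/

noncomputable def logbCharacter (b ω x : ℝ) : ℂ :=
  Complex.exp (-((ω * logb b |x| : ℝ) : ℂ) * Complex.I)

theorem norm_logbCharacter (b ω x : ℝ) : ‖logbCharacter b ω x‖ = 1 := by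
  simp [logbCharacter, Complex.norm_exp]

theorem logbCharacter_mul (b ω : ℝ) {x y : ℝ} (hx : x ≠ 0) (hy : y ≠ 0) :
    logbCharacter b ω (x * y) = logbCharacter b ω x * logbCharacter b ω y := by
  rw [logbCharacter, logbCharacter, logbCharacter, ← Complex.exp_add, abs_mul,
    logb_mul (abs_ne_zero.mpr hx) (abs_ne_zero.mpr hy)]
  push_cast
  congr 1
  ring

theorem integral_comp_inv_mul_mul_logbCharacter (f : ℝ → ℂ) (b ω : ℝ) {a : ℝ} (ha : a ≠ 0) :
    ∫ x, f (a⁻¹ * x) * logbCharacter b ω x =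
      (|a| * logbCharacter b ω a) * ∫ x, f x * logbCharacter b ω x := by
  have hsubst := Measure.integral_comp_mul_left (fun y ↦ f y * logbCharacter b ω (a * y)) a⁻¹
  simp only [inv_inv, ← mul_assoc, mul_inv_cancel₀ ha, one_mul] at hsubst
  rw [hsubst, Complex.real_smul, ← integral_const_mul, ← integral_const_mul]
  refine integral_congr_ae ?_
  filter_upwards [compl_mem_ae_iff.mpr (measure_singleton (0 : ℝ))] with y hy
  rw [logbCharacter_mul b ω ha (by simpa using hy)]
  ring

theorem ggdPdf_eq_inv_mul_ggdPdf_one (c σ x : ℝ) :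
    ggdPdf c σ x = σ⁻¹ * ggdPdf c 1 (σ⁻¹ * x) := by
  simp only [ggdPdf, ggdA, ggdBeta]
  ring_nf

theorem bfCoeff_eq_integral_logbCharacter (c σ : ℝ) (n : ℕ) :
    bfCoeff c σ n = ∫ x, (ggdPdf c σ x : ℂ) * logbCharacter 10 (2 * π * n) x :=
  rfl

theorem bfCoeff_eq_logbCharacter_mul_bfCoeff_one (c : ℝ) {σ : ℝ} (hσ : 0 < σ) (n : ℕ) :
    bfCoeff c σ n = logbCharacter 10 (2 * π * n) σ * bfCoeff c 1 n := by
  simp_rw [bfCoeff_eq_integral_logbCharacter, ggdPdf_eq_inv_mul_ggdPdf_one c σ,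
    Complex.ofReal_mul, mul_assoc, integral_const_mul,
    integral_comp_inv_mul_mul_logbCharacter (fun y ↦ (ggdPdf c 1 y : ℂ)) _ _ hσ.ne', abs_of_pos hσ,
    ← mul_assoc, Complex.ofReal_inv]
  rw [inv_mul_cancel₀ (by exact_mod_cast hσ.ne'), one_mul]

theorem bfCoeff_abs_independent_of_sigma_general (c : ℝ) (σ₁ σ₂ : ℝ)
    (hσ₁ : 0 < σ₁) (hσ₂ : 0 < σ₂) (n : ℕ) :
    ‖bfCoeff c σ₁ n‖ = ‖bfCoeff c σ₂ n‖ := by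
  simp only [bfCoeff_eq_logbCharacter_mul_bfCoeff_one c hσ₁,
    bfCoeff_eq_logbCharacter_mul_bfCoeff_one c hσ₂, norm_mul, norm_logbCharacter]

/-- The modulus of the Benford–Fourier coefficients depends only on the shape
factor `c`, not on the scale `σ`. -/
theorem bfCoeff_abs_independent_of_sigma (c : ℝ) (hc : 0 < c) (σ₁ σ₂ : ℝ)
    (hσ₁ : 0 < σ₁) (hσ₂ : 0 < σ₂) (n : ℕ) (hn : 0 < n) :
    ‖bfCoeff c σ₁ n‖ = ‖bfCoeff c σ₂ n‖ :=
  bfCoeff_abs_independent_of_sigma_general c σ₁ σ₂ hσ₁ hσ₂ n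
end

section
/- For every real x > 0 and every real y, the infinite product ∏_{k=0}^{∞} (1 + y²/(x+k)²)^{−1} converges and the modulus of the Gamma function at a complex argument satisfies |Γ_ℂ(x + i·y)|² = Γ(x)² · ∏_{k=0}^{∞} (1 + y²/(x+k)²)^{−1}. -/
open Real

/-!
Γ(z) is the limit of Euler's sequence `n^z n! / (z (z+1) ⋯ (z+n))`. For `z = x + iy` with `x > 0`
we have `|n^z| = n^x` and `|x + j + iy|² = (x + j)² (1 + y²/(x + j)²)`, so the squared modulus of
the `n`-th term is the square of the real `n`-th term at `x` times the `n + 1`-st partial product.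
The product converges because `∑ y²/(x + k)²` does, and passing to the limit gives the formula.
-/

open Filter Topology Finset

lemma Real.multipliable_inv_one_add_of_summable {ι : Type*} {f : ι → ℝ} (hf : Summable f) :
    Multipliable fun i ↦ (1 + f i)⁻¹ := by
  refine Real.multipliable_of_summable_log' ?_ ?_
  · filter_upwards [hf.tendsto_cofinite_zero.eventually_const_lt neg_one_lt_zero] with i hi
    exact inv_pos.mpr (by linarith)
  · simpa only [Real.log_inv] using (Real.summable_log_one_add_of_summable hf).neg

lemma summable_div_add_natCast_sq (c a : ℝ) : Summable fun k : ℕ ↦ c / (a + k) ^ 2 := by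
  have h := (Real.summable_one_div_nat_add_rpow a 2).mpr one_lt_two
  simp only [Real.rpow_two, sq_abs, add_comm (_ : ℝ) a] at h
  simpa only [mul_one_div] using h.mul_left c

lemma Complex.sq_norm_eq_sq_re_mul_one_add {w : ℂ} (hw : w.re ≠ 0) :
    ‖w‖ ^ 2 = w.re ^ 2 * (1 + w.im ^ 2 / w.re ^ 2) := by
  rw [Complex.sq_norm, Complex.normSq_apply]
  field_simp

lemma Complex.sq_norm_GammaSeq {z : ℂ} (hz : 0 < z.re) (n : ℕ) :
    ‖Complex.GammaSeq z n‖ ^ 2 =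
      Real.GammaSeq z.re n ^ 2 * ∏ j ∈ range (n + 1), (1 + z.im ^ 2 / (z.re + j) ^ 2)⁻¹ := by
  have hre : ∀ j : ℕ, z.re + j ≠ 0 := fun j ↦ by positivity
  have hfactor : ∀ j : ℕ, ‖z + j‖ ^ 2 = (z.re + j) ^ 2 * (1 + z.im ^ 2 / (z.re + j) ^ 2) :=
    fun j ↦ by simpa using Complex.sq_norm_eq_sq_re_mul_one_add (w := z + j) (by simpa using hre j)
  rw [Complex.GammaSeq, Real.GammaSeq, norm_div, norm_mul,
    Complex.norm_natCast_cpow_of_re_ne_zero n hz.ne', Complex.norm_natCast, norm_prod, div_pow,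
    div_pow, ← prod_pow, ← prod_pow]
  simp only [hfactor, prod_mul_distrib, prod_inv_distrib]
  field_simp

/-- Euler-type product formula for the modulus of the Gamma function at a
complex argument: `|Γ(x + iy)|² = Γ(x)² · ∏_{k=0}^{∞} (1 + y²/(x+k)²)⁻¹`. -/
theorem complexGamma_abs_sq_eq_tprod (x : ℝ) (hx : 0 < x) (y : ℝ) :
    Multipliable (fun k : ℕ => (1 + y ^ 2 / (x + k) ^ 2)⁻¹) ∧
    ‖Complex.Gamma ((x : ℂ) + (y : ℂ) * Complex.I)‖ ^ 2 =
      Real.Gamma x ^ 2 * ∏' k : ℕ, (1 + y ^ 2 / (x + k) ^ 2)⁻¹ := by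
  set z : ℂ := x + y * Complex.I
  have hre : z.re = x := by simp [z]
  have him : z.im = y := by simp [z]
  have hmul := Real.multipliable_inv_one_add_of_summable (summable_div_add_natCast_sq (y ^ 2) x)
  have hlim : Tendsto (fun n ↦ ‖Complex.GammaSeq z n‖ ^ 2) atTop (𝓝 (‖Complex.Gamma z‖ ^ 2)) :=
    (Complex.GammaSeq_tendsto_Gamma z).norm.pow 2
  have hprod := hmul.hasProd.tendsto_prod_nat.comp (tendsto_add_atTop_nat 1)
  have hlim' := ((Real.GammaSeq_tendsto_Gamma x).pow 2).mul hprod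
  refine ⟨hmul, tendsto_nhds_unique hlim (hlim'.congr fun n ↦ ?_)⟩
  rw [Function.comp_apply, ← hre, ← him]
  exact (Complex.sq_norm_GammaSeq (hre ▸ hx) n).symm
end
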